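/- Let V be a real vector space, f_S, f_F : V → V, Δt ∈ ℝ, y_n ∈ V, and let M, s_F, s_S be positive integers. Let A^{FF} ∈ ℝ^{s_F×s_F}, A^{SS} ∈ ℝ^{s_S×s_S}, b^F ∈ ℝ^{s_F}, b^S ∈ ℝ^{s_S}, and for each m = 1, …, M let A^{FS,m} ∈ ℝ^{s_F×s_S} and A^{SF,m} ∈ ℝ^{s_S×s_F}. Consider stage vectors Y^S_i ∈ V (i = 1, …, s_S) and Y^{F,m}_i ∈ V (m = 1, …, M; i = 1, …, s_F). Then the following two systems of equations are equivalent, and the resulting updates y_{n+1} agree. (1) The MrGARK equations: Y^S_i = y_n + Δt·Σ_{j=1}^{s_S} a^{SS}_{ij} f_S(Y^S_j) + (Δt/M)·Σ_{m=1}^{M} Σ_{j=1}^{s_F} a^{SF,m}_{ij} f_F(Y^{F,m}_j); Y^{F,m}_i = y_n + (Δt/M)·Σ_{l=1}^{m−1} Σ_{j=1}^{s_F} b^F_j f_F(Y^{F,l}_j) + Δt·Σ_{j=1}^{s_S} a^{FS,m}_{ij} f_S(Y^S_j) + (Δt/M)·Σ_{j=1}^{s_F} a^{FF}_{ij} f_F(Y^{F,m}_j);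 with update y_{n+1} = y_n + (Δt/M)·Σ_{m=1}^{M} Σ_{i=1}^{s_F} b^F_i f_F(Y^{F,m}_i) + Δt·Σ_{i=1}^{s_S} b^S_i f_S(Y^S_i). (2) The GARK equations for the two operators f_F and f_S with the block tableau whose fast-fast block (indexed by pairs (m,i), (l,j)) equals (1/M)·a^{FF}_{ij} if l = m, (1/M)·b^F_j if l < m, and 0 if l > m; whose fast-slow block at ((m,i), j) equals a^{FS,m}_{ij}; whose slow-fast block at (i, (m,j)) equals (1/M)·a^{SF,m}_{ij}; whose slow-slow block equals A^{SS}; with fast weight (1/M)·b^F_i at each index (m,i) and slow weight b^S: namely Y^{ℓ'}_I = y_n + Δt·Σ_{ℓ∈{F,S}} Σ_J A^{ℓ',ℓ}_{I,J} f_ℓ(Y^{ℓ}_J) for each operator ℓ' and stage index I, and y_{n+1} = y_n + Δt·Σ_{ℓ∈{F,S}} Σ_I b^{ℓ}_I f_ℓ(Y^{ℓ}_I). -/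
import Mathlib

open Finset

private lemma smul_div_sum {V : Type*} [AddCommGroup V] [Module ℝ V]
    {ι : Type*} (s : Finset ι) (Δt m : ℝ) (c : ι → ℝ) (v : ι → V) :
    Δt • (∑ i ∈ s, (c i / m) • v i) = (Δt / m) • ∑ i ∈ s, c i • v i := by
  rw [Finset.smul_sum, Finset.smul_sum]
  exact Finset.sum_congr rfl fun i _ => by rw [smul_smul, smul_smul]; ring_nf

/-- An MrGARK method is equivalent to a GARK method with a specific
block-structured tableau: the MrGARK stage equations hold if and only if the
corresponding GARK stage equations hold, and the two update formulas for
`y_{n+1}` agree. -/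
theorem mrgark_eq_gark {V : Type*} [AddCommGroup V] [Module ℝ V]
    (fS fF : V → V) (Δt : ℝ) (yn : V)
    (M sF sS : ℕ) (hM : 0 < M) (hsF : 0 < sF) (hsS : 0 < sS)
    (AFF : Fin sF → Fin sF → ℝ) (ASS : Fin sS → Fin sS → ℝ)
    (bF : Fin sF → ℝ) (bS : Fin sS → ℝ)
    (AFS : Fin M → Fin sF → Fin sS → ℝ)
    (ASF : Fin M → Fin sS → Fin sF → ℝ)
    (YS : Fin sS → V) (YF : Fin M → Fin sF → V) :
    (((∀ i : Fin sS,
        YS i = yn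
          + Δt • (∑ j : Fin sS, ASS i j • fS (YS j))
          + (Δt / M) • (∑ m : Fin M, ∑ j : Fin sF, ASF m i j • fF (YF m j))) ∧
      (∀ (m : Fin M) (i : Fin sF),
        YF m i = yn
          + (Δt / M) • (∑ l ∈ univ.filter (fun l : Fin M => l < m),
              ∑ j : Fin sF, bF j • fF (YF l j))
          + Δt • (∑ j : Fin sS, AFS m i j • fS (YS j))
          + (Δt / M) • (∑ j : Fin sF, AFF i j • fF (YF m j)))) ↔
     ((∀ i : Fin sS,
        YS i = yn
          + Δt • ((∑ m : Fin M, ∑ j : Fin sF, (ASF m i j / M) • fF (YF m j))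
            + ∑ j : Fin sS, ASS i j • fS (YS j))) ∧
      (∀ (m : Fin M) (i : Fin sF),
        YF m i = yn
          + Δt • ((∑ l : Fin M, ∑ j : Fin sF,
              (if l = m then AFF i j / M
               else if l < m then bF j / M else 0) • fF (YF l j))
            + ∑ j : Fin sS, AFS m i j • fS (YS j))))) ∧
    (yn + (Δt / M) • (∑ m : Fin M, ∑ i : Fin sF, bF i • fF (YF m i))
        + Δt • (∑ i : Fin sS, bS i • fS (YS i))
      = yn + Δt • ((∑ m : Fin M, ∑ i : Fin sF, (bF i / M) • fF (YF m i))
          + ∑ i : Fin sS, bS i • fS (YS i))) := by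
  have hslow : ∀ i : Fin sS,
      Δt • ((∑ m : Fin M, ∑ j : Fin sF, (ASF m i j / M) • fF (YF m j))
          + ∑ j : Fin sS, ASS i j • fS (YS j))
      = Δt • (∑ j : Fin sS, ASS i j • fS (YS j))
        + (Δt / M) • (∑ m : Fin M, ∑ j : Fin sF, ASF m i j • fF (YF m j)) := by
    intro i
    rw [smul_add, add_comm]
    congr 1
    rw [Finset.smul_sum, Finset.smul_sum]
    exact Finset.sum_congr rfl fun m _ => smul_div_sum _ _ _ _ _
  have hif : ∀ (m : Fin M) (i : Fin sF),
      (∑ l : Fin M, ∑ j : Fin sF,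
          (if l = m then AFF i j / M
           else if l < m then bF j / M else 0) • fF (YF l j))
      = (∑ l ∈ univ.filter (fun l : Fin M => l < m),
          ∑ j : Fin sF, (bF j / M) • fF (YF l j))
        + ∑ j : Fin sF, (AFF i j / M) • fF (YF m j) := by
    intro m i
    rw [← Finset.sum_filter_add_sum_filter_not univ (fun l : Fin M => l < m)]
    congr 1
    · refine Finset.sum_congr rfl fun l hl => ?_
      rw [Finset.mem_filter] at hl
      refine Finset.sum_congr rfl fun j _ => ?_
      rw [if_neg (by rintro rfl; exact lt_irrefl _ hl.2), if_pos hl.2]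
    · rw [Finset.sum_eq_single m]
      · exact Finset.sum_congr rfl fun j _ => by rw [if_pos rfl]
      · intro l hl hne
        rw [Finset.mem_filter] at hl
        refine Finset.sum_eq_zero fun j _ => ?_
        rw [if_neg hne, if_neg hl.2, zero_smul]
      · intro h
        exact absurd (Finset.mem_filter.mpr ⟨Finset.mem_univ m, lt_irrefl m⟩) h
  have hfast : ∀ (m : Fin M) (i : Fin sF),
      Δt • ((∑ l : Fin M, ∑ j : Fin sF,
          (if l = m then AFF i j / M
           else if l < m then bF j / M else 0) • fF (YF l j))
        + ∑ j : Fin sS, AFS m i j • fS (YS j))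
      = (Δt / M) • (∑ l ∈ univ.filter (fun l : Fin M => l < m),
              ∑ j : Fin sF, bF j • fF (YF l j))
          + Δt • (∑ j : Fin sS, AFS m i j • fS (YS j))
          + (Δt / M) • (∑ j : Fin sF, AFF i j • fF (YF m j)) := by
    intro m i
    rw [hif m i, smul_add, smul_add]
    have h1 : Δt • (∑ l ∈ univ.filter (fun l : Fin M => l < m),
          ∑ j : Fin sF, (bF j / M) • fF (YF l j))
        = (Δt / M) • (∑ l ∈ univ.filter (fun l : Fin M => l < m),
          ∑ j : Fin sF, bF j • fF (YF l j)) := by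
      rw [Finset.smul_sum, Finset.smul_sum]
      exact Finset.sum_congr rfl fun l _ => smul_div_sum _ _ _ _ _
    rw [h1, smul_div_sum]
    abel
  refine ⟨⟨fun ⟨h1, h2⟩ => ⟨fun i => ?_, fun m i => ?_⟩,
      fun ⟨h1, h2⟩ => ⟨fun i => ?_, fun m i => ?_⟩⟩, ?_⟩
  · conv_lhs => rw [h1 i]
    rw [hslow i]; abel
  · conv_lhs => rw [h2 m i]
    rw [hfast m i]; abel
  · conv_lhs => rw [h1 i]
    rw [hslow i]; abel
  · conv_lhs => rw [h2 m i]
    rw [hfast m i]; abel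
  · have : Δt • ((∑ m : Fin M, ∑ i : Fin sF, (bF i / M) • fF (YF m i))
          + ∑ i : Fin sS, bS i • fS (YS i))
        = (Δt / M) • (∑ m : Fin M, ∑ i : Fin sF, bF i • fF (YF m i))
          + Δt • (∑ i : Fin sS, bS i • fS (YS i)) := by
      rw [smul_add]
      congr 1
      rw [Finset.smul_sum, Finset.smul_sum]
      exact Finset.sum_congr rfl fun m _ => smul_div_sum _ _ _ _ _
    rw [this, add_assoc]
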